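/- arXiv:1111.3966 — 6 statements merged into one kernel-verified Lean document; each statement's English description precedes it below -/
import Mathlib

section
/- Fix real numbers a, α, β, δ, μ, ρ with ρ² ≤ 1. Define K = a·α + μ·ρ, M = μ²·(1 − ρ²), V = K² + a²·β² + a²·δ² + M + 1, and for each real λ define f(λ) = (μ² + λ² + 2·μ·ρ·λ)·V − ((μ·ρ + λ)·K + M)² (the determinant of the covariance matrix of (U₂₂′, Y₂′), with var(U₂₂′) = μ² + λ² + 2μρλ, E(U₂₂′Y₂′) = (μρ+λ)K + M, var(Y₂′) = V). Then λ* = (a·α·M − μ·ρ·(a²·β² + a²·δ² + 1)) / (a²·β² + a²·δ² + M + 1) satisfies f(λ*) ≤ f(λ) for every real λ; moreover λ* is the unique global minimizer of f. -/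
/-!
As a function of `λ`, the determinant is a quadratic `D λ² - 2 N λ + C` whose leading coefficient
`D = V - K² = a²β² + a²δ² + M + 1` is positive because `M = μ²(1 - ρ²) ≥ 0`; its unique minimizer
is the vertex `N / D`, and `N = K M - μ ρ D` is the numerator of `λ*`.
-/

theorem quadratic_eq_mul_sub_div_sq_add {𝕜 : Type*} [Field 𝕜] {D N C : 𝕜} (hD : D ≠ 0) (x : 𝕜) :
    D * x ^ 2 - 2 * N * x + C = D * (x - N / D) ^ 2 + (C - N ^ 2 / D) := by
  field_simp
  ring

section Quadratic

variable {𝕜 : Type*} [Field 𝕜] [LinearOrder 𝕜] [IsStrictOrderedRing 𝕜] {D N C : 𝕜}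

theorem quadratic_vertex_le (hD : 0 < D) (x : 𝕜) :
    D * (N / D) ^ 2 - 2 * N * (N / D) + C ≤ D * x ^ 2 - 2 * N * x + C := by
  rw [quadratic_eq_mul_sub_div_sq_add hD.ne', quadratic_eq_mul_sub_div_sq_add hD.ne', sub_self,
    zero_pow two_ne_zero, mul_zero, zero_add]
  exact le_add_of_nonneg_left (by positivity)

theorem eq_vertex_of_quadratic_le (hD : 0 < D) {x : 𝕜}
    (hx : ∀ y, D * x ^ 2 - 2 * N * x + C ≤ D * y ^ 2 - 2 * N * y + C) : x = N / D := by
  have hle := hx (N / D)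
  rw [quadratic_eq_mul_sub_div_sq_add hD.ne', quadratic_eq_mul_sub_div_sq_add hD.ne', sub_self,
    zero_pow two_ne_zero, mul_zero, add_le_add_iff_right] at hle
  have hsq : (x - N / D) ^ 2 = 0 := le_antisymm (nonpos_of_mul_nonpos_right hle hD) (sq_nonneg _)
  exact sub_eq_zero.mp (pow_eq_zero_iff two_ne_zero |>.mp hsq)

end Quadratic

/-- Corollary 3: the optimal binning parameter for the full-duplex Gaussian
Han-Kobayashi PDF-binning scheme, minimizing the determinant of the covariance
matrix of `(U₂₂', Y₂')`; it is the unique global minimizer. -/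
theorem optimal_lambda_FD_HK_PDF_binning (a α β δ μ ρ : ℝ) (hρ : ρ ^ 2 ≤ 1) :
    let K : ℝ := a * α + μ * ρ
    let M : ℝ := μ ^ 2 * (1 - ρ ^ 2)
    let V : ℝ := K ^ 2 + a ^ 2 * β ^ 2 + a ^ 2 * δ ^ 2 + M + 1
    let f : ℝ → ℝ := fun lam =>
      (μ ^ 2 + lam ^ 2 + 2 * μ * ρ * lam) * V - ((μ * ρ + lam) * K + M) ^ 2
    let lamStar : ℝ :=
      (a * α * M - μ * ρ * (a ^ 2 * β ^ 2 + a ^ 2 * δ ^ 2 + 1)) /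
        (a ^ 2 * β ^ 2 + a ^ 2 * δ ^ 2 + M + 1)
    (∀ lam : ℝ, f lamStar ≤ f lam) ∧
      (∀ lam : ℝ, (∀ l : ℝ, f lam ≤ f l) → lam = lamStar) := by
  intro K M V f lamStar
  have hM : 0 ≤ M := mul_nonneg (sq_nonneg μ) (by linarith)
  have hD : 0 < a ^ 2 * β ^ 2 + a ^ 2 * δ ^ 2 + M + 1 := by positivity
  obtain ⟨C, hf⟩ : ∃ C, ∀ lam, f lam = (a ^ 2 * β ^ 2 + a ^ 2 * δ ^ 2 + M + 1) * lam ^ 2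
      - 2 * (a * α * M - μ * ρ * (a ^ 2 * β ^ 2 + a ^ 2 * δ ^ 2 + 1)) * lam + C :=
    ⟨f 0, fun lam => by simp only [f, V, K]; ring⟩
  simp only [hf, lamStar]
  exact ⟨quadratic_vertex_le hD, fun _ => eq_vertex_of_quadratic_le hD⟩
end

section
/- Fix real numbers a, α₂, γ₂, μ, ρ with ρ² ≤ 1. Define K = a·α₂ + μ·ρ, M = μ²·(1 − ρ²), V = K² + a²·γ₂² + M + 1, and for each real λ define f(λ) = (μ² + λ² + 2·μ·ρ·λ)·V − ((μ·ρ + λ)·K + M)². Then λ* = (a·α₂·M − μ·ρ·(a²·γ₂² + 1)) / (a²·γ₂² + M + 1) satisfies f(λ*) ≤ f(λ) for every real λ; moreover λ* is the unique global minimizer of f. -/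
/-!
The coefficient of `λ²` in `f` is `V - K² = a²γ₂² + M + 1`, which is positive because
`M = μ²(1 - ρ²) ≥ 0`. So `f` is a strictly convex quadratic, and `λ*` is its vertex.
-/

lemma quadratic_sub_quadratic_vertex {A : ℝ} (hA : A ≠ 0) (B C x : ℝ) :
    (A * x ^ 2 + B * x + C) - (A * (-B / (2 * A)) ^ 2 + B * (-B / (2 * A)) + C) =
      A * (x - -B / (2 * A)) ^ 2 := by
  field_simp
  ring

lemma isMin_and_unique_of_sub_eq_mul_sq {f : ℝ → ℝ} {A x₀ : ℝ} (hA : 0 < A)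
    (hf : ∀ x, f x - f x₀ = A * (x - x₀) ^ 2) :
    (∀ x, f x₀ ≤ f x) ∧ ∀ x, (∀ y, f x ≤ f y) → x = x₀ := by
  refine ⟨fun x => sub_nonneg.mp (hf x ▸ by positivity), fun x hx => ?_⟩
  have hsq : A * (x - x₀) ^ 2 ≤ 0 := hf x ▸ sub_nonpos.mpr (hx x₀)
  have : (x - x₀) ^ 2 = 0 :=
    le_antisymm ((mul_nonpos_iff_pos_imp_nonpos.mp hsq).1 hA) (sq_nonneg _)
  exact sub_eq_zero.mp (pow_eq_zero_iff two_ne_zero |>.mp this)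

lemma quadratic_isMin_vertex_unique {A : ℝ} (hA : 0 < A) (B C : ℝ) :
    let q : ℝ → ℝ := fun x => A * x ^ 2 + B * x + C
    (∀ x, q (-B / (2 * A)) ≤ q x) ∧ ∀ x, (∀ y, q x ≤ q y) → x = -B / (2 * A) :=
  isMin_and_unique_of_sub_eq_mul_sq hA (quadratic_sub_quadratic_vertex hA.ne' B C)

/-- Corollary (Section VI): the optimal binning parameter for the half-duplex
Gaussian Han-Kobayashi PDF-binning scheme; it is the unique global minimizer. -/
theorem optimal_lambda_HD_HK_PDF_binning (a α₂ γ₂ μ ρ : ℝ) (hρ : ρ ^ 2 ≤ 1) :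
    let K : ℝ := a * α₂ + μ * ρ
    let M : ℝ := μ ^ 2 * (1 - ρ ^ 2)
    let V : ℝ := K ^ 2 + a ^ 2 * γ₂ ^ 2 + M + 1
    let f : ℝ → ℝ := fun lam =>
      (μ ^ 2 + lam ^ 2 + 2 * μ * ρ * lam) * V - ((μ * ρ + lam) * K + M) ^ 2
    let lamStar : ℝ :=
      (a * α₂ * M - μ * ρ * (a ^ 2 * γ₂ ^ 2 + 1)) / (a ^ 2 * γ₂ ^ 2 + M + 1)
    (∀ lam : ℝ, f lamStar ≤ f lam) ∧
      (∀ lam : ℝ, (∀ l : ℝ, f lam ≤ f l) → lam = lamStar) := by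
  intro K M V f lamStar
  have hM : 0 ≤ M := mul_nonneg (sq_nonneg μ) (by linarith)
  set A := a ^ 2 * γ₂ ^ 2 + M + 1 with hA_def
  have hA : 0 < A := by positivity
  set B := 2 * (μ * ρ * A - K * M)
  have hf : f = fun x => A * x ^ 2 + B * x + (μ ^ 2 * V - (μ * ρ * K + M) ^ 2) := by
    funext x
    simp only [f, V, B, hA_def]
    ring
  have hvertex : lamStar = -B / (2 * A) := by
    simp only [lamStar, B, K, hA_def]
    field_simp
    ring
  rw [hf, hvertex]
  exact quadratic_isMin_vertex_unique hA B _
end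

section
/- Let P₁ ≥ 0, P₂ ≥ 0 and a, b, c be real numbers, and let C(x) = (1/2)·log₂(1 + x). Define S₁ = { min( C(c²β²/(c²γ²+1)) + C(γ²/(b²μ²(1−ρ²)+1)), C(((α+bμρ)² + β² + γ²)/(b²μ²(1−ρ²)+1)) ) : α, β, γ, μ, ρ ∈ ℝ, α² + β² + γ² ≤ P₁, μ² ≤ P₂, ρ² ≤ 1 } and S₂ = { min( C(c²β²/(c²γ²+1)) + C(γ²), C((α + b·√P₂)² + β² + γ²) ) : α, β, γ ∈ ℝ, α² + β² + γ² ≤ P₁ }. Then sSup S₁ = sSup S₂. -/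
/-!
Every point of the region at `(μ, ρ)` is dominated by a point of the region at
`ρ = 1`, `μ = √P₂`: the interference factor `b²μ²(1 - ρ²) + 1` is at least `1`,
so dropping it only enlarges both rates, and `|bμρ| ≤ |b√P₂|`, so replacing `α` by
`α' = ±|α|` with the sign of `b√P₂` keeps the power `α²` and makes the coherent
term `(α + bμρ)²` at most `(α' + b√P₂)²`. Conversely `ρ = 1`, `μ = √P₂` is a choice
of parameters, so the two sets dominate each other and have the same supremum.
-/

lemma half_logb_two_one_add_le {x y : ℝ} (hx : 0 < 1 + x) (hxy : x ≤ y) :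
    1 / 2 * Real.logb 2 (1 + x) ≤ 1 / 2 * Real.logb 2 (1 + y) := by
  gcongr
  norm_num

lemma one_le_mul_one_sub_sq_add_one (b μ : ℝ) {ρ : ℝ} (hρ : ρ ^ 2 ≤ 1) :
    1 ≤ b ^ 2 * μ ^ 2 * (1 - ρ ^ 2) + 1 := by
  have : 0 ≤ b ^ 2 * μ ^ 2 * (1 - ρ ^ 2) := mul_nonneg (by positivity) (by linarith)
  linarith

lemma abs_mul_mul_le_abs_mul_sqrt (b : ℝ) {μ ρ P : ℝ} (hμ : μ ^ 2 ≤ P) (hρ : ρ ^ 2 ≤ 1) :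
    |b * μ * ρ| ≤ |b * √P| := by
  have hμρ : |μ * ρ| ≤ √P := Real.abs_le_sqrt (by nlinarith [sq_nonneg μ])
  rw [mul_assoc, abs_mul b, abs_mul b, abs_of_nonneg (Real.sqrt_nonneg P)]
  exact mul_le_mul_of_nonneg_left hμρ (abs_nonneg b)

lemma exists_sq_eq_and_add_sq_le (α : ℝ) {s t : ℝ} (hst : |s| ≤ |t|) :
    ∃ α' : ℝ, α' ^ 2 = α ^ 2 ∧ (α + s) ^ 2 ≤ (α' + t) ^ 2 := by
  obtain ⟨α', hsq, haligned⟩ : ∃ α' : ℝ, α' ^ 2 = α ^ 2 ∧ α' * t = |α| * |t| := by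
    rcases le_or_gt 0 t with ht | ht
    · exact ⟨|α|, sq_abs α, by rw [abs_of_nonneg ht]⟩
    · exact ⟨-|α|, by rw [neg_sq, sq_abs], by rw [abs_of_neg ht]; ring⟩
  refine ⟨α', hsq, ?_⟩
  have hcross : α * s ≤ |α| * |t| :=
    (le_abs_self _).trans ((abs_mul α s).trans_le (mul_le_mul_of_nonneg_left hst (abs_nonneg α)))
  have hsq_le : s ^ 2 ≤ t ^ 2 := sq_le_sq.mpr hst
  nlinarith

theorem FD_PDF_binning_maxR1_general (P₁ P₂ b c : ℝ) (hP₂ : 0 ≤ P₂) :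
    let C : ℝ → ℝ := fun x => (1 / 2) * Real.logb 2 (1 + x)
    let S₁ : Set ℝ := {r | ∃ α β γ μ ρ : ℝ,
      α ^ 2 + β ^ 2 + γ ^ 2 ≤ P₁ ∧ μ ^ 2 ≤ P₂ ∧ ρ ^ 2 ≤ 1 ∧
      r = min
        (C (c ^ 2 * β ^ 2 / (c ^ 2 * γ ^ 2 + 1)) +
          C (γ ^ 2 / (b ^ 2 * μ ^ 2 * (1 - ρ ^ 2) + 1)))
        (C (((α + b * μ * ρ) ^ 2 + β ^ 2 + γ ^ 2) /
          (b ^ 2 * μ ^ 2 * (1 - ρ ^ 2) + 1)))}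
    let S₂ : Set ℝ := {r | ∃ α β γ : ℝ,
      α ^ 2 + β ^ 2 + γ ^ 2 ≤ P₁ ∧
      r = min
        (C (c ^ 2 * β ^ 2 / (c ^ 2 * γ ^ 2 + 1)) + C (γ ^ 2))
        (C ((α + b * Real.sqrt P₂) ^ 2 + β ^ 2 + γ ^ 2))}
    sSup S₁ = sSup S₂ := by
  intro C S₁ S₂
  apply csSup_eq_csSup_of_forall_exists_le
  · rintro _ ⟨α, β, γ, μ, ρ, hpow, hμ, hρ, rfl⟩
    have hD := one_le_mul_one_sub_sq_add_one b μ hρ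
    obtain ⟨α', hsq, hcoh⟩ :=
      exists_sq_eq_and_add_sq_le α (abs_mul_mul_le_abs_mul_sqrt b hμ hρ)
    refine ⟨_, ⟨α', β, γ, hsq ▸ hpow, rfl⟩, min_le_min ?_ ?_⟩
    · exact add_le_add le_rfl
        (half_logb_two_one_add_le (by positivity) (div_le_self (sq_nonneg γ) hD))
    · exact half_logb_two_one_add_le (by positivity)
        ((div_le_self (by positivity) hD).trans (by linarith))
  · rintro _ ⟨α, β, γ, hpow, rfl⟩
    exact ⟨_, ⟨α, β, γ, √P₂, 1, hpow, (Real.sq_sqrt hP₂).le, by norm_num, rfl⟩, by norm_num⟩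

/-- Equation (25): in the full-duplex Gaussian PDF-binning region, the maximum
rate for user 1 equals the partial decode-forward relaying rate, obtained at
ρ = ±1 and μ = ρ√P₂. -/
theorem FD_PDF_binning_maxR1 (P₁ P₂ a b c : ℝ) (hP₁ : 0 ≤ P₁) (hP₂ : 0 ≤ P₂) :
    let C : ℝ → ℝ := fun x => (1 / 2) * Real.logb 2 (1 + x)
    let S₁ : Set ℝ := {r | ∃ α β γ μ ρ : ℝ,
      α ^ 2 + β ^ 2 + γ ^ 2 ≤ P₁ ∧ μ ^ 2 ≤ P₂ ∧ ρ ^ 2 ≤ 1 ∧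
      r = min
        (C (c ^ 2 * β ^ 2 / (c ^ 2 * γ ^ 2 + 1)) +
          C (γ ^ 2 / (b ^ 2 * μ ^ 2 * (1 - ρ ^ 2) + 1)))
        (C (((α + b * μ * ρ) ^ 2 + β ^ 2 + γ ^ 2) /
          (b ^ 2 * μ ^ 2 * (1 - ρ ^ 2) + 1)))}
    let S₂ : Set ℝ := {r | ∃ α β γ : ℝ,
      α ^ 2 + β ^ 2 + γ ^ 2 ≤ P₁ ∧
      r = min
        (C (c ^ 2 * β ^ 2 / (c ^ 2 * γ ^ 2 + 1)) + C (γ ^ 2))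
        (C ((α + b * Real.sqrt P₂) ^ 2 + β ^ 2 + γ ^ 2))}
    sSup S₁ = sSup S₂ :=
  FD_PDF_binning_maxR1_general P₁ P₂ b c hP₂
end

section
/- Let P₁ ≥ 0, P₂ ≥ 0 and a be real numbers, and let C(x) = (1/2)·log₂(1 + x). Consider the set S of real numbers of the form C(μ²(1−ρ²)/(a²β² + a²δ² + 1)) + C(θ²/((aα+μρ)² + a²β² + a²δ² + μ²(1−ρ²) + 1)) where the real parameters α, β, γ, δ, θ, μ, ρ range over all values satisfying α² + β² + γ² + δ² ≤ P₁, θ² + μ² ≤ P₂ and ρ² ≤ 1. Then C(P₂) is the greatest element of S; that is, C(P₂) ∈ S and every element of S is at most C(P₂). -/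
/-!
Both summands can only grow when the interference terms `a²β² + a²δ²` and `(aα + μρ)²` are dropped
from the noise, which leaves `C(m) + C(θ²/(1 + m))` with `m = μ²(1 - ρ²) ≤ μ²`. By the chain rule
for the Gaussian capacity (successive decoding) this is `C(m + θ²) ≤ C(P₂)`, with equality when
`S₂` puts all of its power into `θ = √P₂`.
-/

open Real

noncomputable def gaussianCapacity (x : ℝ) : ℝ := (1 / 2) * logb 2 (1 + x)

theorem gaussianCapacity_le_gaussianCapacity {x y : ℝ} (hx : -1 < x) (hxy : x ≤ y) :
    gaussianCapacity x ≤ gaussianCapacity y := by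
  unfold gaussianCapacity
  gcongr
  · norm_num
  · linarith

theorem gaussianCapacity_add_gaussianCapacity_div {m t : ℝ} (hm : -1 < m) (hmt : -1 < m + t) :
    gaussianCapacity m + gaussianCapacity (t / (1 + m)) = gaussianCapacity (m + t) := by
  have hm' : (1 + m) ≠ 0 := by linarith
  have hsplit : 1 + t / (1 + m) = (1 + m + t) / (1 + m) := by field_simp
  unfold gaussianCapacity
  rw [hsplit, logb_div (by linarith) hm', ← add_assoc]
  ring

/-- Section IV-D: the maximum rate for user 2 in the full-duplex Gaussian
Han-Kobayashi PDF-binning region equals the interference-free rate `C(P₂)`. -/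
theorem FD_HK_PDF_binning_maxR2 (P₁ P₂ a : ℝ) (hP₁ : 0 ≤ P₁) (hP₂ : 0 ≤ P₂) :
    let C : ℝ → ℝ := fun x => (1 / 2) * Real.logb 2 (1 + x)
    let S : Set ℝ := {r | ∃ α β γ δ θ μ ρ : ℝ,
      α ^ 2 + β ^ 2 + γ ^ 2 + δ ^ 2 ≤ P₁ ∧ θ ^ 2 + μ ^ 2 ≤ P₂ ∧ ρ ^ 2 ≤ 1 ∧
      r = C (μ ^ 2 * (1 - ρ ^ 2) / (a ^ 2 * β ^ 2 + a ^ 2 * δ ^ 2 + 1)) +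
        C (θ ^ 2 / ((a * α + μ * ρ) ^ 2 + a ^ 2 * β ^ 2 + a ^ 2 * δ ^ 2 +
          μ ^ 2 * (1 - ρ ^ 2) + 1))}
    C P₂ ∈ S ∧ ∀ r ∈ S, r ≤ C P₂ := by
  intro C S
  refine ⟨⟨0, 0, 0, 0, √P₂, 0, 0, by simpa, by simp [hP₂], by simp, by simp [C, hP₂]⟩, ?_⟩
  rintro r ⟨α, β, γ, δ, θ, μ, ρ, -, hpow, hρ, rfl⟩
  set m := μ ^ 2 * (1 - ρ ^ 2)
  have hm : 0 ≤ m := mul_nonneg (sq_nonneg μ) (by linarith)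
  have hmμ : m ≤ μ ^ 2 := by nlinarith [sq_nonneg μ, sq_nonneg ρ]
  have hfirst : gaussianCapacity (m / (a ^ 2 * β ^ 2 + a ^ 2 * δ ^ 2 + 1)) ≤ gaussianCapacity m :=
    gaussianCapacity_le_gaussianCapacity (neg_one_lt_zero.trans_le (div_nonneg hm (by positivity)))
      (div_le_self hm (by nlinarith [sq_nonneg (a * β), sq_nonneg (a * δ)]))
  have hsecond : gaussianCapacity (θ ^ 2 / ((a * α + μ * ρ) ^ 2 + a ^ 2 * β ^ 2 + a ^ 2 * δ ^ 2 +
      m + 1)) ≤ gaussianCapacity (θ ^ 2 / (1 + m)) :=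
    gaussianCapacity_le_gaussianCapacity 
      (neg_one_lt_zero.trans_le (div_nonneg (sq_nonneg θ) (by positivity)))
      (div_le_div_of_nonneg_left (sq_nonneg θ) (by linarith)
        (by nlinarith [sq_nonneg (a * α + μ * ρ), sq_nonneg (a * β), sq_nonneg (a * δ)]))
  calc _ ≤ gaussianCapacity m + gaussianCapacity (θ ^ 2 / (1 + m)) := add_le_add hfirst hsecond
    _ = gaussianCapacity (m + θ ^ 2) :=
      gaussianCapacity_add_gaussianCapacity_div (by linarith) (by linarith [sq_nonneg θ])
    _ ≤ C P₂ := gaussianCapacity_le_gaussianCapacity (by linarith [sq_nonneg θ]) (by linarith)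
end

section
/- Let P₁ ≥ 0, P₂ ≥ 0 and a, b, c be real numbers, and let C(x) = (1/2)·log₂(1 + x). For real parameters α, β, γ, δ, θ, μ, ρ write M = μ²(1−ρ²), K = α + bμρ, and define I₂ = C(c²β²/(c²γ² + c²δ² + 1)), I₅ = C((γ² + δ²)/(b²M + 1)), I₆ = C((β² + γ² + δ²)/(b²M + 1)) + C(K²/(β² + γ² + δ² + b²θ² + b²M + 1)). Define S₁ = { min(I₂ + I₅, I₆) : α² + β² + γ² + δ² ≤ P₁, θ² + μ² ≤ P₂, ρ² ≤ 1 } and S₂ = { min( C(c²β²/(c²γ²+1)) + C(γ²), C((α + b·√P₂)² + β² + γ²) ) : α² + β² + γ² ≤ P₁ }. Then sSup S₁ = sSup S₂. -/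
/-!
Every rate of the binning region is dominated by a partial decode-forward rate: the binning
noise `b²μ²(1 - ρ²)` and the interference `b²θ²` only shrink the mutual informations, the
common and private splits `γ, δ` can be merged into one private power `γ² + δ²`, and the
coherent relay term `α + bμρ` is at most `|α| + |b|√P₂`, which is the coherent term of (25)
once the sign of `α` is aligned with `b`. The chain rule `C(p) + C(q / (p + 1)) = C(p + q)`
then turns the two terms of `I₆` into the second term of (25). Conversely, (25) is the binning
rate with `δ = θ = 0`, `μ = √P₂`, `ρ = 1`.
-/

open Real

noncomputable section

def gaussCap (x : ℝ) : ℝ := 1 / 2 * logb 2 (1 + x)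

lemma gaussCap_le_gaussCap {x y : ℝ} (hx : 0 < 1 + x) (h : x ≤ y) : gaussCap x ≤ gaussCap y := by
  unfold gaussCap
  gcongr
  linarith

lemma gaussCap_add_gaussCap_div {p q : ℝ} (hp : p + 1 ≠ 0) (hpq : p + q + 1 ≠ 0) :
    gaussCap p + gaussCap (q / (p + 1)) = gaussCap (p + q) := by
  have hq : 1 + q / (p + 1) = (p + q + 1) / (p + 1) := by field_simp; ring
  unfold gaussCap
  rw [← mul_add, ← logb_mul (by rwa [add_comm]) (by rw [hq]; exact div_ne_zero hpq hp)]
  congr 2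
  field_simp
  ring

lemma gaussCap_div_add_gaussCap_div_le {p q d e : ℝ} (hp : 0 ≤ p) (hq : 0 ≤ q) (hd : 1 ≤ d)
    (he : p + 1 ≤ e) : gaussCap (p / d) + gaussCap (q / e) ≤ gaussCap (p + q) :=
  have hpd : 0 ≤ p / d := div_nonneg hp (by linarith)
  have hqe : 0 ≤ q / e := div_nonneg hq (by linarith)
  calc gaussCap (p / d) + gaussCap (q / e) ≤ gaussCap p + gaussCap (q / (p + 1)) := by
        gcongr
        · exact gaussCap_le_gaussCap (by linarith) (div_le_self hp hd)
        · exact gaussCap_le_gaussCap (by linarith)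
            (div_le_div_of_nonneg_left hq (by positivity) he)
    _ = gaussCap (p + q) := gaussCap_add_gaussCap_div (by positivity) (by positivity)

lemma sq_add_mul_le_sq_abs_add_mul {x y t s : ℝ} (ht : |t| ≤ s) :
    (x + y * t) ^ 2 ≤ (|x| + |y| * s) ^ 2 := by
  have hs : 0 ≤ s := (abs_nonneg t).trans ht
  rw [sq_le_sq, abs_of_nonneg (by positivity : 0 ≤ |x| + |y| * s)]
  calc |x + y * t| ≤ |x| + |y| * |t| := by rw [← abs_mul]; exact abs_add_le _ _
    _ ≤ |x| + |y| * s := by gcongr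

lemma exists_sq_eq_and_sq_add_mul_eq (x y s : ℝ) :
    ∃ x' : ℝ, x' ^ 2 = x ^ 2 ∧ (x' + y * s) ^ 2 = (|x| + |y| * s) ^ 2 := by
  rcases le_or_gt 0 y with hy | hy
  · exact ⟨|x|, sq_abs x, by rw [abs_of_nonneg hy]⟩
  · refine ⟨-|x|, by rw [neg_sq, sq_abs], ?_⟩
    rw [abs_of_neg hy]
    ring

def hkBinningRate (b c α β γ δ θ μ ρ : ℝ) : ℝ :=
  let M := μ ^ 2 * (1 - ρ ^ 2)
  min (gaussCap (c ^ 2 * β ^ 2 / (c ^ 2 * γ ^ 2 + c ^ 2 * δ ^ 2 + 1)) +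
      gaussCap ((γ ^ 2 + δ ^ 2) / (b ^ 2 * M + 1)))
    (gaussCap ((β ^ 2 + γ ^ 2 + δ ^ 2) / (b ^ 2 * M + 1)) +
      gaussCap ((α + b * μ * ρ) ^ 2 / (β ^ 2 + γ ^ 2 + δ ^ 2 + b ^ 2 * θ ^ 2 + b ^ 2 * M + 1)))

def pdfRate (b c P₂ α β γ : ℝ) : ℝ :=
  min (gaussCap (c ^ 2 * β ^ 2 / (c ^ 2 * γ ^ 2 + 1)) + gaussCap (γ ^ 2))
    (gaussCap ((α + b * √P₂) ^ 2 + β ^ 2 + γ ^ 2))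

lemma pdfRate_eq_hkBinningRate (b c P₂ α β γ : ℝ) :
    pdfRate b c P₂ α β γ = hkBinningRate b c α β γ 0 0 √P₂ 1 := by
  have hchain := gaussCap_add_gaussCap_div (p := β ^ 2 + γ ^ 2) (q := (α + b * √P₂) ^ 2)
    (by positivity) (by positivity)
  simp only [pdfRate, hkBinningRate]
  norm_num
  rw [hchain]
  ring_nf

lemma hkBinningRate_le_pdfRate {P₁ P₂ b c α β γ δ θ μ ρ : ℝ}
    (h₁ : α ^ 2 + β ^ 2 + γ ^ 2 + δ ^ 2 ≤ P₁) (h₂ : θ ^ 2 + μ ^ 2 ≤ P₂) (hρ : ρ ^ 2 ≤ 1) :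
    ∃ α' β' γ' : ℝ, α' ^ 2 + β' ^ 2 + γ' ^ 2 ≤ P₁ ∧
      hkBinningRate b c α β γ δ θ μ ρ ≤ pdfRate b c P₂ α' β' γ' := by
  obtain ⟨g, hg⟩ : ∃ g : ℝ, g ^ 2 = γ ^ 2 + δ ^ 2 := ⟨_, sq_sqrt (by positivity)⟩
  obtain ⟨α', hα', hK⟩ := exists_sq_eq_and_sq_add_mul_eq α b √P₂
  have hμρ : |μ * ρ| ≤ √P₂ := by
    rw [← sqrt_sq_eq_abs]
    exact sqrt_le_sqrt (by nlinarith [sq_nonneg θ, sq_nonneg μ])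
  have hK_le : (α + b * μ * ρ) ^ 2 ≤ (α' + b * √P₂) ^ 2 := by
    rw [hK, mul_assoc]
    exact sq_add_mul_le_sq_abs_add_mul hμρ
  have hnoise : 1 ≤ b ^ 2 * (μ ^ 2 * (1 - ρ ^ 2)) + 1 :=
    le_add_of_nonneg_left (mul_nonneg (sq_nonneg b) (mul_nonneg (sq_nonneg μ) (sub_nonneg.2 hρ)))
  refine ⟨α', β, g, by linarith, min_le_min ?_ ?_⟩
  · rw [← mul_add, ← hg]
    gcongr
    exact gaussCap_le_gaussCap (by positivity) (div_le_self (sq_nonneg g) hnoise)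
  · calc _ ≤ gaussCap (β ^ 2 + γ ^ 2 + δ ^ 2 + (α + b * μ * ρ) ^ 2) :=
          gaussCap_div_add_gaussCap_div_le (by positivity) (sq_nonneg _) hnoise
            (by linarith [mul_nonneg (sq_nonneg b) (sq_nonneg θ)])
      _ ≤ _ := gaussCap_le_gaussCap (by positivity) (by linarith)

end

theorem FD_HK_PDF_binning_maxR1_general (P₁ P₂ b c : ℝ) (hP₂ : 0 ≤ P₂) :
    let C : ℝ → ℝ := fun x => (1 / 2) * Real.logb 2 (1 + x)
    let S₁ : Set ℝ := {r | ∃ α β γ δ θ μ ρ : ℝ,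
      α ^ 2 + β ^ 2 + γ ^ 2 + δ ^ 2 ≤ P₁ ∧ θ ^ 2 + μ ^ 2 ≤ P₂ ∧ ρ ^ 2 ≤ 1 ∧
      (let M : ℝ := μ ^ 2 * (1 - ρ ^ 2)
       let K : ℝ := α + b * μ * ρ
       let I₂ : ℝ := C (c ^ 2 * β ^ 2 / (c ^ 2 * γ ^ 2 + c ^ 2 * δ ^ 2 + 1))
       let I₅ : ℝ := C ((γ ^ 2 + δ ^ 2) / (b ^ 2 * M + 1))
       let I₆ : ℝ := C ((β ^ 2 + γ ^ 2 + δ ^ 2) / (b ^ 2 * M + 1)) +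
         C (K ^ 2 / (β ^ 2 + γ ^ 2 + δ ^ 2 + b ^ 2 * θ ^ 2 + b ^ 2 * M + 1))
       r = min (I₂ + I₅) I₆)}
    let S₂ : Set ℝ := {r | ∃ α β γ : ℝ,
      α ^ 2 + β ^ 2 + γ ^ 2 ≤ P₁ ∧
      r = min
        (C (c ^ 2 * β ^ 2 / (c ^ 2 * γ ^ 2 + 1)) + C (γ ^ 2))
        (C ((α + b * Real.sqrt P₂) ^ 2 + β ^ 2 + γ ^ 2))}
    sSup S₁ = sSup S₂ := by
  intro C S₁ S₂
  apply csSup_eq_csSup_of_forall_exists_le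
  · rintro r ⟨α, β, γ, δ, θ, μ, ρ, h₁, h₂, hρ, rfl⟩
    obtain ⟨α', β', γ', h, hle⟩ := hkBinningRate_le_pdfRate (b := b) (c := c) h₁ h₂ hρ
    exact ⟨_, ⟨α', β', γ', h, rfl⟩, hle⟩
  · rintro r ⟨α, β, γ, h, rfl⟩
    refine ⟨_, ⟨α, β, γ, 0, 0, √P₂, 1, by linarith, by simp [sq_sqrt hP₂], by norm_num, rfl⟩,
      (pdfRate_eq_hkBinningRate b c P₂ α β γ).le⟩

/-- Section IV-D: the maximum rate for user 1 in the full-duplex Gaussian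
Han-Kobayashi PDF-binning region equals the partial decode-forward relaying
rate of equation (25). -/
theorem FD_HK_PDF_binning_maxR1 (P₁ P₂ a b c : ℝ) (hP₁ : 0 ≤ P₁) (hP₂ : 0 ≤ P₂) :
    let C : ℝ → ℝ := fun x => (1 / 2) * Real.logb 2 (1 + x)
    let S₁ : Set ℝ := {r | ∃ α β γ δ θ μ ρ : ℝ,
      α ^ 2 + β ^ 2 + γ ^ 2 + δ ^ 2 ≤ P₁ ∧ θ ^ 2 + μ ^ 2 ≤ P₂ ∧ ρ ^ 2 ≤ 1 ∧
      (let M : ℝ := μ ^ 2 * (1 - ρ ^ 2)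
       let K : ℝ := α + b * μ * ρ
       let I₂ : ℝ := C (c ^ 2 * β ^ 2 / (c ^ 2 * γ ^ 2 + c ^ 2 * δ ^ 2 + 1))
       let I₅ : ℝ := C ((γ ^ 2 + δ ^ 2) / (b ^ 2 * M + 1))
       let I₆ : ℝ := C ((β ^ 2 + γ ^ 2 + δ ^ 2) / (b ^ 2 * M + 1)) +
         C (K ^ 2 / (β ^ 2 + γ ^ 2 + δ ^ 2 + b ^ 2 * θ ^ 2 + b ^ 2 * M + 1))
       r = min (I₂ + I₅) I₆)}
    let S₂ : Set ℝ := {r | ∃ α β γ : ℝ,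
      α ^ 2 + β ^ 2 + γ ^ 2 ≤ P₁ ∧
      r = min
        (C (c ^ 2 * β ^ 2 / (c ^ 2 * γ ^ 2 + 1)) + C (γ ^ 2))
        (C ((α + b * Real.sqrt P₂) ^ 2 + β ^ 2 + γ ^ 2))}
    sSup S₁ = sSup S₂ :=
  FD_HK_PDF_binning_maxR1_general P₁ P₂ b c hP₂
end

section
/- Let P₁ ≥ 0, P₂ ≥ 0 and a be real numbers, and let C(x) = (1/2)·log₂(1 + x). Consider the set S of real numbers of the form (1−τ)·[ C(μ²(1−ρ²)/(a²γ₂² + 1)) + C(θ²/((aα₂+μρ)² + a²γ₂² + μ²(1−ρ²) + 1)) ] where the real parameters τ, α₁, α₂, β₂, γ₂, θ, μ, ρ range over all values satisfying 0 ≤ τ ≤ 1, τ·α₁² + (1−τ)·(α₂² + β₂² + γ₂²) ≤ P₁, (1−τ)·(μ² + θ²) ≤ P₂ and ρ² ≤ 1. Then C(P₂) is the greatest element of S; that is, C(P₂) ∈ S and every element of S is at most C(P₂). -/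
/-!
Write `C(x) = ½·log₂(1 + x)`. Since `C x + C y = C (x + y + x y)`, the two decoding
stages together carry at most `C(μ²(1-ρ²) + θ²)`: the interference `a²γ₂²` only shrinks
the first SINR, and the second stage sees at least the first stage's signal `μ²(1-ρ²)`
as noise. Concavity of `C` in the form `λ·C(s) ≤ C(λ·s)` (Bernoulli's inequality) then
absorbs the time share `1 - τ` into the power, and `(1 - τ)(μ² + θ²) ≤ P₂` finishes.
The bound is attained with full time (`τ = 0`), no correlation and all power on `μ`.
-/

open Real

noncomputable def capacity (x : ℝ) : ℝ := 1 / 2 * logb 2 (1 + x)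

lemma capacity_le_capacity {x y : ℝ} (hx : -1 < x) (hxy : x ≤ y) :
    capacity x ≤ capacity y := by
  unfold capacity
  gcongr
  · norm_num
  · linarith

lemma capacity_add_capacity {x y : ℝ} (hx : -1 < x) (hy : -1 < y) :
    capacity x + capacity y = capacity (x + y + x * y) := by
  have hprod : 1 + (x + y + x * y) = (1 + x) * (1 + y) := by ring
  unfold capacity
  rw [hprod, logb_mul (by linarith) (by linarith)]
  ring

lemma mul_log_one_add_le_log_one_add_mul {l s : ℝ} (hl0 : 0 ≤ l) (hl1 : l ≤ 1)
    (hs : 0 ≤ s) :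
    l * log (1 + s) ≤ log (1 + l * s) := by
  rw [← log_rpow (by linarith)]
  exact log_le_log (by positivity) (rpow_one_add_le_one_add_mul_self (by linarith) hl0 hl1)

lemma mul_capacity_le_capacity_mul {l s : ℝ} (hl0 : 0 ≤ l) (hl1 : l ≤ 1) (hs : 0 ≤ s) :
    l * capacity s ≤ capacity (l * s) := by
  unfold capacity logb
  have hlog2 : 0 < log 2 := log_pos one_lt_two
  rw [mul_left_comm, ← mul_div_assoc]
  gcongr
  exact mul_log_one_add_le_log_one_add_mul hl0 hl1 hs

lemma capacity_div_add_capacity_div_le {m t A B : ℝ} (hm : 0 ≤ m) (ht : 0 ≤ t)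
    (hA : 1 ≤ A) (hB : 1 + m ≤ B) :
    capacity (m / A) + capacity (t / B) ≤ capacity (m + t) := by
  have hx : 0 ≤ m / A := by positivity
  have hy : 0 ≤ t / B := div_nonneg ht (by linarith)
  rw [capacity_add_capacity (by linarith) (by linarith)]
  refine capacity_le_capacity (by nlinarith [mul_nonneg hx hy]) ?_
  have hxm : m / A ≤ m := div_le_self hm hA
  have hyt : t / B ≤ t / (1 + m) := div_le_div_of_nonneg_left ht (by linarith) hB
  calc m / A + t / B + m / A * (t / B) = (1 + m / A) * (1 + t / B) - 1 := by ring
    _ ≤ (1 + m) * (1 + t / (1 + m)) - 1 := by gcongr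
    _ = m + t := by field_simp; ring

/-- Equation (36): in the half-duplex Gaussian Han-Kobayashi PDF-binning
region, the maximum rate for the second user is the interference-free rate
`C(P₂)`. -/
theorem HD_HK_PDF_binning_maxR2 (P₁ P₂ a : ℝ) (hP₁ : 0 ≤ P₁) (hP₂ : 0 ≤ P₂) :
    let C : ℝ → ℝ := fun x => (1 / 2) * Real.logb 2 (1 + x)
    let S : Set ℝ := {r | ∃ τ α₁ α₂ β₂ γ₂ θ μ ρ : ℝ,
      0 ≤ τ ∧ τ ≤ 1 ∧
      τ * α₁ ^ 2 + (1 - τ) * (α₂ ^ 2 + β₂ ^ 2 + γ₂ ^ 2) ≤ P₁ ∧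
      (1 - τ) * (μ ^ 2 + θ ^ 2) ≤ P₂ ∧ ρ ^ 2 ≤ 1 ∧
      r = (1 - τ) *
        (C (μ ^ 2 * (1 - ρ ^ 2) / (a ^ 2 * γ₂ ^ 2 + 1)) +
          C (θ ^ 2 / ((a * α₂ + μ * ρ) ^ 2 + a ^ 2 * γ₂ ^ 2 +
            μ ^ 2 * (1 - ρ ^ 2) + 1)))}
    C P₂ ∈ S ∧ ∀ r ∈ S, r ≤ C P₂ := by
  intro C S
  constructor
  · refine ⟨0, 0, 0, 0, 0, 0, √P₂, 0, le_rfl, zero_le_one, by simpa using hP₁,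
      by simp [sq_sqrt hP₂], by norm_num, ?_⟩
    simp [C, sq_sqrt hP₂]
  · rintro r ⟨τ, α₁, α₂, β₂, γ₂, θ, μ, ρ, hτ0, hτ1, -, hpow, hρ, rfl⟩
    set m := μ ^ 2 * (1 - ρ ^ 2)
    have hm : 0 ≤ m := mul_nonneg (sq_nonneg μ) (by linarith)
    have hpow' : (1 - τ) * (m + θ ^ 2) ≤ P₂ := by
      nlinarith [mul_nonneg (sq_nonneg μ) (sq_nonneg ρ)]
    calc _ ≤ (1 - τ) * capacity (m + θ ^ 2) := by
          refine mul_le_mul_of_nonneg_left ?_ (by linarith)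
          exact capacity_div_add_capacity_div_le hm (sq_nonneg θ)
            (by nlinarith [sq_nonneg (a * γ₂)])
            (by nlinarith [sq_nonneg (a * α₂ + μ * ρ), sq_nonneg (a * γ₂)])
      _ ≤ capacity ((1 - τ) * (m + θ ^ 2)) :=
          mul_capacity_le_capacity_mul (by linarith) (by linarith) (by positivity)
      _ ≤ capacity P₂ := capacity_le_capacity (by nlinarith [sq_nonneg θ]) hpow'
end
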